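/- Let μ be a probability measure on the cone 𝒫 of n×n positive definite matrices, and f the density of V^{1/2}Z with V ~ μ independent of Z ~ N(0, I_n). Then f ∈ L²(ℝⁿ) if and only if E[det(V+V₁)^{-1/2}] < ∞ for independent V, V₁ ~ μ, and in that case ∫_{ℝⁿ} f² dx = (2π)^{-n/2} E[det(V+V₁)^{-1/2}]. -/

import Mathlib

open MeasureTheory Real Matrix

noncomputable instance matrixMeasurableSpace (n : ℕ) :
    MeasurableSpace (Matrix (Fin n) (Fin n) ℝ) := borel _

instance matrixBorelSpace (n : ℕ) : BorelSpace (Matrix (Fin n) (Fin n) ℝ) := ⟨rfl⟩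

/-!
By Tonelli, `∫ f² = E ∫ φ_V(x) φ_{V₁}(x) dx`, where `φ_v` is the centred Gaussian density with
covariance `v`. The product `φ_v φ_w` is a multiple of `exp (-xᵀ (v⁻¹ + w⁻¹) x / 2)`, so its
integral is explicit, and `det v * det (v⁻¹ + w⁻¹) * det w = det (v + w)` turns it into
`(2π)^{-n/2} det (v + w)^{-1/2}` (the density of `N(0, v + w)` at the origin). Since each `φ_v`
has mass one, `∫⁻ φ_V dμ` is finite almost everywhere, so there it agrees with the Bochner
integral defining `f`.
-/

open ENNReal (ofReal)
open scoped ENNReal MatrixOrder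

instance Matrix.secondCountableTopology {m n : Type*} [Countable m] [Countable n] :
    SecondCountableTopology (Matrix m n ℝ) :=
  inferInstanceAs (SecondCountableTopology (m → n → ℝ))

theorem Real.rpow_neg_mul_rpow_self {x : ℝ} (hx : 0 < x) (y : ℝ) : x ^ (-y) * x ^ y = 1 := by
  rw [← rpow_add hx, neg_add_cancel, rpow_zero]

theorem Matrix.det_mul_det_inv_add_inv_mul_det {ι R : Type*} [Fintype ι] [DecidableEq ι]
    [CommRing R] {v w : Matrix ι ι R} (hv : IsUnit v.det) (hw : IsUnit w.det) :
    v.det * (v⁻¹ + w⁻¹).det * w.det = (v + w).det := by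
  rw [← det_mul, ← det_mul, mul_add, add_mul, mul_nonsing_inv v hv, one_mul, mul_assoc,
    nonsing_inv_mul w hw, mul_one, add_comm]

section Mixture

variable {α β : Type*} [MeasurableSpace α] [MeasurableSpace β] {μ : Measure α} {ν : Measure β}

theorem memLp_two_iff_lintegral_ofReal_sq_lt_top {f : β → ℝ} (hf : AEStronglyMeasurable f ν) :
    MemLp f 2 ν ↔ ∫⁻ x, ofReal (f x ^ 2) ∂ν < ∞ := by
  rw [memLp_two_iff_integrable_sq hf, Integrable,
    hasFiniteIntegral_iff_ofReal (ae_of_all _ fun _ => sq_nonneg _)]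
  exact and_iff_right (hf.pow 2)

theorem lintegral_ofReal_sq_integral_eq_lintegral_prod [SFinite μ] [SFinite ν] {k : α → β → ℝ}
    (hk : Measurable fun p : α × β => k p.1 p.2) (hk_nonneg : ∀ᵐ a ∂μ, ∀ x, 0 ≤ k a x)
    (hk_mass : ∫⁻ a, ∫⁻ x, ofReal (k a x) ∂ν ∂μ ≠ ∞) :
    ∫⁻ x, ofReal ((∫ a, k a x ∂μ) ^ 2) ∂ν
      = ∫⁻ p : α × α, ∫⁻ x, ofReal (k p.1 x) * ofReal (k p.2 x) ∂ν ∂μ.prod μ := by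
  set K := fun x => ∫⁻ a, ofReal (k a x) ∂μ
  have hkx (x : β) : Measurable fun a => k a x := hk.comp (measurable_id.prodMk measurable_const)
  have hK_fin : ∀ᵐ x ∂ν, K x ≠ ∞ := by
    refine (ae_lt_top hk.ennreal_ofReal.lintegral_prod_left' ?_).mono fun _ => ne_of_lt
    rwa [lintegral_lintegral_swap (hk.comp measurable_swap).ennreal_ofReal.aemeasurable]
  have hsq : ∀ᵐ x ∂ν, ofReal ((∫ a, k a x ∂μ) ^ 2) = K x * K x := by
    filter_upwards [hK_fin] with x hx
    rw [integral_eq_lintegral_of_nonneg_ae (hk_nonneg.mono fun a ha => ha x)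
      (hkx x).aestronglyMeasurable, sq, ENNReal.ofReal_mul ENNReal.toReal_nonneg,
      ENNReal.ofReal_toReal hx]
  calc ∫⁻ x, ofReal ((∫ a, k a x ∂μ) ^ 2) ∂ν
      = ∫⁻ x, K x * K x ∂ν := lintegral_congr_ae hsq
    _ = ∫⁻ x, ∫⁻ p : α × α, ofReal (k p.1 x) * ofReal (k p.2 x) ∂μ.prod μ ∂ν :=
        lintegral_congr fun x => (lintegral_prod_mul (hkx x).ennreal_ofReal.aemeasurable
          (hkx x).ennreal_ofReal.aemeasurable).symm
    _ = _ := lintegral_lintegral_swap (by fun_prop)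

end Mixture

section Gaussian

variable {ι : Type*} [Fintype ι]

theorem integral_exp_neg_dotProduct_self_div_two :
    ∫ y : ι → ℝ, exp (-(y ⬝ᵥ y) / 2) = (2 * π) ^ (Fintype.card ι / 2 : ℝ) := by
  have h := GaussianFourier.integral_rexp_neg_mul_sq_norm (V := EuclideanSpace ℝ ι)
    (b := 1 / 2) (by norm_num)
  rw [← (EuclideanSpace.volume_preserving_symm_measurableEquiv_toLp ι).symm.integral_comp'] at h
  simpa [EuclideanSpace.real_norm_sq_eq, dotProduct, ← sq, div_eq_inv_mul, Finset.sum_div] using h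

theorem lintegral_exp_neg_dotProduct_self_div_two :
    ∫⁻ y : ι → ℝ, ofReal (exp (-(y ⬝ᵥ y) / 2))
      = ofReal ((2 * π) ^ (Fintype.card ι / 2 : ℝ)) := by
  have hint : Integrable fun y : ι → ℝ => exp (-(y ⬝ᵥ y) / 2) :=
    Integrable.of_integral_ne_zero (by rw [integral_exp_neg_dotProduct_self_div_two]; positivity)
  rw [← ofReal_integral_eq_lintegral_ofReal hint (ae_of_all _ fun _ => (exp_pos _).le),
    integral_exp_neg_dotProduct_self_div_two]

variable [DecidableEq ι]

theorem Matrix.PosDef.lintegral_exp_neg_dotProduct_mulVec_div_two {A : Matrix ι ι ℝ}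
    (hA : A.PosDef) :
    ∫⁻ x : ι → ℝ, ofReal (exp (-(x ⬝ᵥ A *ᵥ x) / 2))
      = ofReal ((2 * π) ^ (Fintype.card ι / 2 : ℝ) * A.det ^ (-(1 : ℝ) / 2)) := by
  obtain ⟨B, rfl⟩ := CStarAlgebra.nonneg_iff_eq_star_mul_self.mp hA.posSemidef.nonneg
  have hquad (x : ι → ℝ) : x ⬝ᵥ (star B * B) *ᵥ x = B *ᵥ x ⬝ᵥ B *ᵥ x := by
    rw [← mulVec_mulVec, dotProduct_mulVec, star_eq_conjTranspose, vecMul_conjTranspose]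
    simp only [star_trivial]
  have hdet : (star B * B).det = B.det ^ 2 := by
    rw [det_mul, star_eq_conjTranspose, det_conjTranspose, star_trivial, sq]
  have hB : B.det ≠ 0 := by
    have := hA.det_pos
    rw [hdet] at this
    exact pow_ne_zero_iff two_ne_zero |>.mp this.ne'
  calc ∫⁻ x : ι → ℝ, ofReal (exp (-(x ⬝ᵥ (star B * B) *ᵥ x) / 2))
      = ∫⁻ y, ofReal (exp (-(y ⬝ᵥ y) / 2)) ∂(volume.map (toLin' B)) := by
        rw [lintegral_map (by fun_prop) (toLin' B).continuous_of_finiteDimensional.measurable]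
        simp [hquad]
    _ = ofReal |B.det⁻¹| * ofReal ((2 * π) ^ (Fintype.card ι / 2 : ℝ)) := by
        rw [Real.map_matrix_volume_pi_eq_smul_volume_pi hB, lintegral_smul_measure,
          lintegral_exp_neg_dotProduct_self_div_two, smul_eq_mul]
    _ = _ := by
        rw [← ENNReal.ofReal_mul (abs_nonneg _), mul_comm, hdet, neg_div, rpow_neg (sq_nonneg _),
          ← sqrt_eq_rpow, sqrt_sq_eq_abs, abs_inv]

noncomputable def gaussianDensity (v : Matrix ι ι ℝ) (x : ι → ℝ) : ℝ :=
  (2 * π) ^ (-(Fintype.card ι : ℝ) / 2) * v.det ^ (-(1 : ℝ) / 2) * exp (-(x ⬝ᵥ v⁻¹ *ᵥ x) / 2)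

theorem Matrix.PosDef.gaussianDensity_nonneg {v : Matrix ι ι ℝ} (hv : v.PosDef) (x : ι → ℝ) :
    0 ≤ gaussianDensity v x := by
  have := hv.det_pos
  unfold gaussianDensity
  positivity

theorem Matrix.PosDef.lintegral_gaussianDensity {v : Matrix ι ι ℝ} (hv : v.PosDef) :
    ∫⁻ x, ofReal (gaussianDensity v x) = 1 := by
  have hdet := hv.det_pos
  have hc : 0 ≤ (2 * π) ^ (-(Fintype.card ι : ℝ) / 2) * v.det ^ (-(1 : ℝ) / 2) := by positivity
  simp_rw [gaussianDensity, ENNReal.ofReal_mul hc]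
  rw [lintegral_const_mul' _ _ ENNReal.ofReal_ne_top,
    hv.inv.lintegral_exp_neg_dotProduct_mulVec_div_two, ← ENNReal.ofReal_mul hc,
    det_nonsing_inv, Ring.inverse_eq_inv', inv_rpow hdet.le, ← rpow_neg hdet.le,
    mul_mul_mul_comm, ← rpow_add hdet, neg_div _ (Fintype.card ι : ℝ),
    rpow_neg_mul_rpow_self (by positivity)]
  norm_num

theorem Matrix.PosDef.lintegral_gaussianDensity_mul {v w : Matrix ι ι ℝ} (hv : v.PosDef)
    (hw : w.PosDef) :
    ∫⁻ x, ofReal (gaussianDensity v x) * ofReal (gaussianDensity w x)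
      = ofReal ((2 * π) ^ (-(Fintype.card ι : ℝ) / 2) * (v + w).det ^ (-(1 : ℝ) / 2)) := by
  have hdv := hv.det_pos
  have hdw := hw.det_pos
  have hdvw := (hv.inv.add hw.inv).det_pos
  rw [neg_div _ (Fintype.card ι : ℝ)]
  set c := (2 * π) ^ (-(Fintype.card ι / 2 : ℝ))
  have hc : 0 ≤ c * v.det ^ (-(1 : ℝ) / 2) * (c * w.det ^ (-(1 : ℝ) / 2)) := by positivity
  have hprod (x : ι → ℝ) : gaussianDensity v x * gaussianDensity w x
      = c * v.det ^ (-(1 : ℝ) / 2) * (c * w.det ^ (-(1 : ℝ) / 2)) *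
        exp (-(x ⬝ᵥ (v⁻¹ + w⁻¹) *ᵥ x) / 2) := by
    rw [gaussianDensity, gaussianDensity, neg_div _ (Fintype.card ι : ℝ), add_mulVec,
      dotProduct_add, neg_add, add_div, exp_add]
    ring
  simp_rw [← ENNReal.ofReal_mul (hv.gaussianDensity_nonneg _), hprod, ENNReal.ofReal_mul hc]
  rw [lintegral_const_mul' _ _ ENNReal.ofReal_ne_top,
    (hv.inv.add hw.inv).lintegral_exp_neg_dotProduct_mulVec_div_two, ← ENNReal.ofReal_mul hc,
    ← det_mul_det_inv_add_inv_mul_det hdv.ne'.isUnit hdw.ne'.isUnit,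
    mul_rpow (mul_pos hdv hdvw).le hdw.le, mul_rpow hdv.le hdvw.le]
  congr 1
  linear_combination (c * v.det ^ (-(1 : ℝ) / 2) * w.det ^ (-(1 : ℝ) / 2) *
    (v⁻¹ + w⁻¹).det ^ (-(1 : ℝ) / 2)) * rpow_neg_mul_rpow_self (x := 2 * π) (by positivity) _

variable [MeasurableSpace (Matrix ι ι ℝ)] [BorelSpace (Matrix ι ι ℝ)]

instance : MeasurableInv (Matrix ι ι ℝ) where
  measurable_inv := by
    rw [show (Inv.inv : Matrix ι ι ℝ → Matrix ι ι ℝ) = fun v => v.det⁻¹ • v.adjugate from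
      funext fun v => by rw [inv_def, Ring.inverse_eq_inv']]
    fun_prop

theorem measurable_gaussianDensity :
    Measurable fun p : Matrix ι ι ℝ × (ι → ℝ) => gaussianDensity p.1 p.2 := by
  unfold gaussianDensity
  fun_prop

end Gaussian

/-- Multivariate version: `f ∈ L²(ℝⁿ)` iff `E[det(V+V₁)^{-1/2}] < ∞`, and in that case
`∫ f² = (2π)^{-n/2} E[det(V+V₁)^{-1/2}]`. -/
theorem matrix_gaussian_scale_mixture_L2 (n : ℕ)
    (μ : Measure (Matrix (Fin n) (Fin n) ℝ)) [IsProbabilityMeasure μ]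
    (hμ : ∀ᵐ v ∂μ, v.PosDef)
    (f : (Fin n → ℝ) → ℝ)
    (hf : ∀ x, f x =
        ∫ v : Matrix (Fin n) (Fin n) ℝ,
          (2 * π) ^ (-(n : ℝ) / 2) * v.det ^ (-(1 : ℝ) / 2) *
            Real.exp (-(x ⬝ᵥ v⁻¹.mulVec x) / 2) ∂μ) :
    (MemLp f 2 volume ↔
        (∫⁻ p : Matrix (Fin n) (Fin n) ℝ × Matrix (Fin n) (Fin n) ℝ,
            ENNReal.ofReal ((p.1 + p.2).det ^ (-(1 : ℝ) / 2)) ∂(μ.prod μ)) < ⊤) ∧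
      (MemLp f 2 volume →
        (∫ x, f x ^ 2) =
          (2 * π) ^ (-(n : ℝ) / 2) *
            ∫ p : Matrix (Fin n) (Fin n) ℝ × Matrix (Fin n) (Fin n) ℝ,
              (p.1 + p.2).det ^ (-(1 : ℝ) / 2) ∂(μ.prod μ)) := by
  obtain rfl : f = fun x => ∫ v, gaussianDensity v x ∂μ :=
    funext fun x => by simpa [gaussianDensity] using hf x
  have hμμ : ∀ᵐ p ∂μ.prod μ, p.1.PosDef ∧ p.2.PosDef :=
    (Measure.quasiMeasurePreserving_fst.ae hμ).and (Measure.quasiMeasurePreserving_snd.ae hμ)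
  set L := ∫⁻ p, ofReal ((p.1 + p.2).det ^ (-(1 : ℝ) / 2)) ∂μ.prod μ
  have hc : 0 < (2 * π) ^ (-(n : ℝ) / 2) := by positivity
  have hL : ∫⁻ x, ofReal ((∫ v, gaussianDensity v x ∂μ) ^ 2)
      = ofReal ((2 * π) ^ (-(n : ℝ) / 2)) * L := by
    rw [lintegral_ofReal_sq_integral_eq_lintegral_prod measurable_gaussianDensity
      (hμ.mono fun v hv => hv.gaussianDensity_nonneg)
      (by simp [lintegral_congr_ae (hμ.mono fun v hv => hv.lintegral_gaussianDensity)]),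
      ← lintegral_const_mul' _ _ ENNReal.ofReal_ne_top]
    refine lintegral_congr_ae ?_
    filter_upwards [hμμ] with p hp
    rw [hp.1.lintegral_gaussianDensity_mul hp.2, Fintype.card_fin, ENNReal.ofReal_mul hc.le]
  have hfm : AEStronglyMeasurable (fun x => ∫ v, gaussianDensity v x ∂μ) volume :=
    (measurable_gaussianDensity.comp measurable_swap).stronglyMeasurable.integral_prod_right'
      |>.aestronglyMeasurable
  have hmem : MemLp (fun x => ∫ v, gaussianDensity v x ∂μ) 2 volume ↔ L < ∞ := by
    rw [memLp_two_iff_lintegral_ofReal_sq_lt_top hfm, hL, lt_top_iff_ne_top, lt_top_iff_ne_top]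
    simp [ENNReal.mul_eq_top, hc]
  refine ⟨hmem, fun _ => ?_⟩
  rw [integral_eq_lintegral_of_nonneg_ae (ae_of_all _ fun _ => sq_nonneg _) (hfm.pow 2), hL,
    integral_eq_lintegral_of_nonneg_ae
      (hμμ.mono fun p hp => rpow_nonneg (hp.1.add hp.2).det_pos.le _)
      (Measurable.aestronglyMeasurable (by fun_prop)), ENNReal.toReal_mul,
    ENNReal.toReal_ofReal hc.le]
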